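/- A 3×3 Hermitian matrix A is positive definite if and only if tr A > 0, P₁₂ + P₁₃ > 0, and det A > 0, where P₁₂ and P₁₃ are the 2×2 principal minors with index sets {1,2} and {1,3}. -/

import Mathlib

/-!
Completing the square in the first coordinate, `a₁₁ · x*Ax = |(Ax)₁|² + y*Sy` with `y` the tail
of `x` and `S` equal to `a₁₁` times the Schur complement of `a₁₁`, shows that for `a₁₁ > 0` the
matrix `A` is positive definite iff `S` is. Used twice, this is Sylvester's criterion
`a₁₁ > 0, P₁₂ > 0, det A > 0`. Since `S` is Hermitian with diagonal `P₁₂, P₁₃` and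
`det S = a₁₁ det A`, we have `a₁₁ det A = P₁₂ P₁₃ - |s₁₂|²`. Real arithmetic then converts
Sylvester's conditions into the stated ones: `P₁₂ + P₁₃ > 0` forces `a₁₁ (a₂₂ + a₃₃) > 0`, which
together with `tr A > 0` gives `a₁₁ > 0`, and then `P₁₂ P₁₃ > |s₁₂|² ≥ 0` gives `P₁₂, P₁₃ > 0`.
-/

open scoped ComplexOrder Matrix

theorem leadingMinors_pos_iff_trace_pos {a b c d s t u : ℝ} (hs : 0 ≤ s) (ht : 0 ≤ t)
    (hu : 0 ≤ u) (hdet : a * d = (a * b - s) * (a * c - t) - u) :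
    (0 < a ∧ 0 < a * b - s ∧ 0 < d) ↔
      (0 < a + b + c ∧ 0 < (a * b - s) + (a * c - t)) ∧ 0 < d := by
  constructor
  · rintro ⟨ha, h12, hd⟩
    have h13 : 0 < a * c - t := by nlinarith [mul_pos ha hd]
    have hb : 0 < b := by nlinarith
    have hc : 0 < c := by nlinarith
    exact ⟨⟨by linarith, by linarith⟩, hd⟩
  · rintro ⟨⟨htr, hsum⟩, hd⟩
    have ha : 0 < a := by nlinarith
    have hprod : 0 < (a * b - s) * (a * c - t) := by nlinarith [mul_pos ha hd]
    have h12 : 0 < a * b - s := by nlinarith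
    exact ⟨ha, h12, hd⟩

namespace Matrix

variable {𝕜 : Type*} [RCLike 𝕜] {n : ℕ}

/-- `A 0 0` times the Schur complement of the pivot `A 0 0`; the scaling avoids a division. -/
def scaledSchurComplement (A : Matrix (Fin (n + 1)) (Fin (n + 1)) 𝕜) :
    Matrix (Fin n) (Fin n) 𝕜 :=
  A 0 0 • A.submatrix Fin.succ Fin.succ - vecMulVec (fun i => A i.succ 0) (fun j => A 0 j.succ)

lemma scaledSchurComplement_apply (A : Matrix (Fin (n + 1)) (Fin (n + 1)) 𝕜) (i j : Fin n) :
    scaledSchurComplement A i j = A 0 0 * A i.succ j.succ - A i.succ 0 * A 0 j.succ := by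
  simp [scaledSchurComplement, vecMulVec_apply]

lemma isHermitian_scaledSchurComplement {A : Matrix (Fin (n + 1)) (Fin (n + 1)) 𝕜}
    (hA : A.IsHermitian) : (scaledSchurComplement A).IsHermitian := by
  ext i j
  simp only [conjTranspose_apply, scaledSchurComplement_apply, star_sub, star_mul', hA.apply]
  ring

lemma mulVec_apply_zero {α : Type*} [NonUnitalNonAssocSemiring α]
    (A : Matrix (Fin (n + 1)) (Fin (n + 1)) α) (x : Fin (n + 1) → α) :
    (A *ᵥ x) 0 = A 0 0 * x 0 + (fun j => A 0 j.succ) ⬝ᵥ Fin.tail x := by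
  simp [mulVec, dotProduct, Fin.sum_univ_succ, Fin.tail]

lemma IsHermitian.apply_zero_zero_mul_dotProduct_mulVec
    {A : Matrix (Fin (n + 1)) (Fin (n + 1)) 𝕜} (hA : A.IsHermitian) (x : Fin (n + 1) → 𝕜) :
    A 0 0 * (star x ⬝ᵥ A *ᵥ x) = star ((A *ᵥ x) 0) * (A *ᵥ x) 0
      + star (Fin.tail x) ⬝ᵥ scaledSchurComplement A *ᵥ Fin.tail x := by
  set u : Fin n → 𝕜 := fun i => A i.succ 0
  set v : Fin n → 𝕜 := fun j => A 0 j.succ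
  set y := Fin.tail x
  have hrow : (A *ᵥ x) 0 = A 0 0 * x 0 + v ⬝ᵥ y := mulVec_apply_zero A x
  have hrow_star : star ((A *ᵥ x) 0) = A 0 0 * star (x 0) + star y ⬝ᵥ u := by
    rw [hrow, star_add, star_mul', hA.apply, ← star_dotProduct_star]
    congr 2
    ext i
    exact hA.apply _ _
  have hform : star x ⬝ᵥ A *ᵥ x = star (x 0) * (A *ᵥ x) 0 + x 0 * (star y ⬝ᵥ u)
      + star y ⬝ᵥ A.submatrix Fin.succ Fin.succ *ᵥ y := by
    have htail : Fin.tail (A *ᵥ x) = x 0 • u + A.submatrix Fin.succ Fin.succ *ᵥ y := by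
      ext i
      simp [mulVec, dotProduct, Fin.sum_univ_succ, u, y, Fin.tail, mul_comm]
    rw [dotProduct, Fin.sum_univ_succ, ← dotProduct, Pi.star_apply, add_assoc]
    change _ + star y ⬝ᵥ Fin.tail (A *ᵥ x) = _
    rw [htail, dotProduct_add, dotProduct_smul, smul_eq_mul]
  have hschur : star y ⬝ᵥ scaledSchurComplement A *ᵥ y
      = A 0 0 * (star y ⬝ᵥ A.submatrix Fin.succ Fin.succ *ᵥ y) - (star y ⬝ᵥ u) * (v ⬝ᵥ y) := by
    simp only [scaledSchurComplement, sub_mulVec, smul_mulVec, vecMulVec_mulVec, dotProduct_sub,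
      dotProduct_smul, smul_eq_mul, op_smul_eq_mul]
    ring
  rw [hform, hschur, hrow_star, hrow]
  ring

theorem posDef_iff_pos_and_posDef_scaledSchurComplement
    {A : Matrix (Fin (n + 1)) (Fin (n + 1)) 𝕜} (hA : A.IsHermitian) :
    A.PosDef ↔ 0 < A 0 0 ∧ (scaledSchurComplement A).PosDef := by
  constructor
  · intro hPD
    have ha : 0 < A 0 0 := hPD.diag_pos
    refine ⟨ha, .of_dotProduct_mulVec_pos (isHermitian_scaledSchurComplement hA) fun y hy => ?_⟩
    obtain ⟨x₀, hx₀⟩ : ∃ x₀, A 0 0 * x₀ + (fun j => A 0 j.succ) ⬝ᵥ y = 0 :=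
      ⟨-((fun j => A 0 j.succ) ⬝ᵥ y) / A 0 0, by rw [mul_div_cancel₀ _ ha.ne', neg_add_cancel]⟩
    have hx : (Fin.cons x₀ y : Fin (n + 1) → 𝕜) ≠ 0 := cons_nonzero_iff.mpr (.inr hy)
    have hxy := hA.apply_zero_zero_mul_dotProduct_mulVec (Fin.cons x₀ y)
    rw [mulVec_apply_zero, Fin.cons_zero, Fin.tail_cons, hx₀, star_zero, zero_mul, zero_add] at hxy
    rw [← hxy]
    exact mul_pos ha (hPD.dotProduct_mulVec_pos hx)
  · rintro ⟨ha, hS⟩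
    refine .of_dotProduct_mulVec_pos hA fun x hx => pos_of_mul_pos_right ?_ ha.le
    rw [hA.apply_zero_zero_mul_dotProduct_mulVec]
    by_cases hy : Fin.tail x = 0
    · have hx0 : x 0 ≠ 0 := fun h0 =>
        hx (by rw [← Fin.cons_self_tail x, h0, hy]; exact cons_zero_zero)
      have hrow : (A *ᵥ x) 0 ≠ 0 := by
        rw [mulVec_apply_zero, hy, dotProduct_zero, add_zero]
        exact mul_ne_zero ha.ne' hx0
      rw [hy, mulVec_zero, dotProduct_zero, add_zero]
      exact star_mul_self_pos (IsRegular.of_ne_zero hrow)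
    · exact add_pos_of_nonneg_of_pos (star_mul_self_nonneg _) (hS.dotProduct_mulVec_pos hy)

theorem posDef_fin_one_iff (A : Matrix (Fin 1) (Fin 1) 𝕜) : A.PosDef ↔ 0 < A 0 0 := by
  obtain ⟨a, rfl⟩ : ∃ a, A = diagonal fun _ => a :=
    ⟨A 0 0, by ext i j; fin_cases i; fin_cases j; rfl⟩
  simp [posDef_diagonal_iff]

theorem IsHermitian.posDef_fin_two_iff {A : Matrix (Fin 2) (Fin 2) 𝕜} (hA : A.IsHermitian) :
    A.PosDef ↔ 0 < A 0 0 ∧ 0 < A.det := by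
  have hS : scaledSchurComplement A 0 0 = A.det := by
    rw [scaledSchurComplement_apply, det_fin_two, Fin.succ_zero_eq_one]
    ring
  rw [posDef_iff_pos_and_posDef_scaledSchurComplement hA, posDef_fin_one_iff, hS]

theorem IsHermitian.posDef_fin_three_iff {A : Matrix (Fin 3) (Fin 3) 𝕜} (hA : A.IsHermitian) :
    A.PosDef ↔ 0 < A 0 0 ∧ 0 < A 0 0 * A 1 1 - A 0 1 * A 1 0 ∧ 0 < A.det := by
  have hS : scaledSchurComplement A 0 0 = A 0 0 * A 1 1 - A 0 1 * A 1 0 := by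
    rw [scaledSchurComplement_apply, Fin.succ_zero_eq_one]
    ring
  have hdetS : (scaledSchurComplement A).det = A 0 0 * A.det := by
    simp only [det_fin_two, det_fin_three, scaledSchurComplement_apply, Fin.succ_zero_eq_one,
      Fin.succ_one_eq_two]
    ring
  rw [posDef_iff_pos_and_posDef_scaledSchurComplement hA,
    (isHermitian_scaledSchurComplement hA).posDef_fin_two_iff, hS, hdetS]
  exact and_congr_right fun ha => and_congr_right' (mul_pos_iff_of_pos_left ha)

lemma IsHermitian.coe_re_det {m : Type*} [Fintype m] [DecidableEq m] {A : Matrix m m 𝕜}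
    (hA : A.IsHermitian) : (RCLike.re A.det : 𝕜) = A.det := by
  rw [← RCLike.conj_eq_iff_re, ← RCLike.star_def, ← det_conjTranspose, hA.eq]

open Complex ComplexConjugate in
lemma IsHermitian.re_mul_re_det_fin_three {A : Matrix (Fin 3) (Fin 3) ℂ} (hA : A.IsHermitian) :
    (A 0 0).re * A.det.re =
      ((A 0 0).re * (A 1 1).re - normSq (A 0 1)) * ((A 0 0).re * (A 2 2).re - normSq (A 0 2))
        - normSq (A 0 0 * A 1 2 - A 1 0 * A 0 2) := by
  have hre (i : Fin 3) : ((A i i).re : ℂ) = A i i := hA.coe_re_apply_self i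
  have hdet : (A.det.re : ℂ) = A.det := hA.coe_re_det
  have hconj (i j : Fin 3) : conj (A i j) = A j i := hA.apply j i
  apply ofReal_injective
  push_cast
  simp only [hre, hdet, normSq_eq_conj_mul_self, map_sub, map_mul, hconj]
  rw [det_fin_three]
  ring

open Complex ComplexConjugate in
theorem IsHermitian.posDef_fin_three_iff_re {A : Matrix (Fin 3) (Fin 3) ℂ}
    (hA : A.IsHermitian) :
    A.PosDef ↔
      0 < (A 0 0).re ∧ 0 < (A 0 0).re * (A 1 1).re - normSq (A 0 1) ∧ 0 < A.det.re := by
  have hre (i : Fin 3) : ((A i i).re : ℂ) = A i i := hA.coe_re_apply_self i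
  have hdet : (A.det.re : ℂ) = A.det := hA.coe_re_det
  have hminor :
      A 0 0 * A 1 1 - A 0 1 * A 1 0 = ((A 0 0).re * (A 1 1).re - normSq (A 0 1) : ℝ) := by
    push_cast
    rw [hre, hre, ← mul_conj, show conj (A 0 1) = A 1 0 from hA.apply 1 0]
  rw [hA.posDef_fin_three_iff, hminor, zero_lt_real, ← zero_lt_real (x := (A 0 0).re),
    ← zero_lt_real (x := A.det.re), hre, hdet]

end Matrix

theorem posDef_iff_crit_v (A : Matrix (Fin 3) (Fin 3) ℂ) (hA : A.IsHermitian) :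
    A.PosDef ↔
      (0 < (A 0 0).re + (A 1 1).re + (A 2 2).re ∧ 0 < ((A 0 0).re * (A 1 1).re - Complex.normSq (A 0 1)) + ((A 0 0).re * (A 2 2).re - Complex.normSq (A 0 2))) ∧ 0 < A.det.re := by
  rw [hA.posDef_fin_three_iff_re]
  exact leadingMinors_pos_iff_trace_pos (Complex.normSq_nonneg _) (Complex.normSq_nonneg _)
    (Complex.normSq_nonneg _) hA.re_mul_re_det_fin_three
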